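/- arXiv:2006.06067 — 4 statements merged into one kernel-verified Lean document; each statement's English description precedes it below -/
import Mathlib

section
/- Fix positive integers q and k. If G is a graph with clique number ω(G) = k that does not contain K_{2,q} as an induced minor, then every minimal separator of G has size at most R(k+1, q) − 1. -/
open SimpleGraph

/-- Every graph on at least `N` vertices has a clique of size `k` or an independent set
of size `l`. -/
def RamseyProp (N k l : ℕ) : Prop :=
  ∀ (V : Type) [Fintype V] (G : SimpleGraph V), N ≤ Fintype.card V →
    (∃ s : Finset V, G.IsNClique k s) ∨ (∃ s : Finset V, Gᶜ.IsNClique l s)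

/-- The Ramsey number `R(k, l)`: the least positive `N` with the Ramsey property. -/
noncomputable def ramseyNumber (k l : ℕ) : ℕ := sInf {N | 0 < N ∧ RamseyProp N k l}

/-- `X` is a minor model of `H` in `G`: pairwise disjoint connected bags, with an edge of `G`
between the bags of any two adjacent vertices of `H`. -/
def IsMinorModel {α V : Type*} (H : SimpleGraph α) (G : SimpleGraph V) (X : α → Set V) : Prop :=
  (∀ u v, u ≠ v → Disjoint (X u) (X v)) ∧
  (∀ u, (G.induce (X u)).Connected) ∧
  (∀ ⦃u v⦄, H.Adj u v → ∃ a ∈ X u, ∃ b ∈ X v, G.Adj a b)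

/-- `X` is an induced minor model of `H` in `G`: pairwise disjoint connected bags, with an edge
of `G` between two bags if and only if the corresponding vertices of `H` are adjacent. -/
def IsInducedMinorModel {α V : Type*} (H : SimpleGraph α) (G : SimpleGraph V)
    (X : α → Set V) : Prop :=
  (∀ u v, u ≠ v → Disjoint (X u) (X v)) ∧
  (∀ u, (G.induce (X u)).Connected) ∧
  (∀ u v, u ≠ v → ((∃ a ∈ X u, ∃ b ∈ X v, G.Adj a b) ↔ H.Adj u v))

/-- `G` contains `H` as a minor. -/
def HasMinor {V α : Type*} (G : SimpleGraph V) (H : SimpleGraph α) : Prop :=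
  ∃ X, IsMinorModel H G X

/-- `G` contains `H` as an induced minor. -/
def HasInducedMinor {V α : Type*} (G : SimpleGraph V) (H : SimpleGraph α) : Prop :=
  ∃ X, IsInducedMinorModel H G X

/-- The Hadwiger number of `G`: the largest `p` such that `K_p` is a minor of `G`. -/
noncomputable def hadwigerNumber {V : Type*} (G : SimpleGraph V) : ℕ :=
  sSup {p | HasMinor G (⊤ : SimpleGraph (Fin p))}

/-- Every walk from `u` to `v` meets `S`: removing `S` leaves `u` and `v` in different
components. -/
def Separates {V : Type*} (G : SimpleGraph V) (S : Set V) (u v : V) : Prop :=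
  ∀ p : G.Walk u v, ∃ x ∈ p.support, x ∈ S

/-- `S` is a minimal `u,v`-separator for some nonadjacent pair `u, v`. -/
def IsMinimalSeparator {V : Type*} (G : SimpleGraph V) (S : Set V) : Prop :=
  ∃ u v : V, u ≠ v ∧ ¬ G.Adj u v ∧ u ∉ S ∧ v ∉ S ∧ Separates G S u v ∧
    ∀ S' ⊂ S, ¬ Separates G S' u v

/-- `C` is an `S`-full component of `G - S`: a connected component of `G - S` such that every
vertex of `S` has a neighbor in `C`. -/
def IsFullComponent {V : Type*} (G : SimpleGraph V) (S C : Set V) : Prop :=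
  Disjoint C S ∧ (G.induce C).Connected ∧
  (∀ x ∈ C, ∀ y, G.Adj x y → y ∉ S → y ∈ C) ∧
  (∀ s ∈ S, ∃ c ∈ C, G.Adj s c)

private lemma clique_map_subtype {V : Type} {A : Set V} {H : SimpleGraph ↥A}
    {G' : SimpleGraph V} (hadj : ∀ x y : ↥A, H.Adj x y → G'.Adj ↑x ↑y) {n : ℕ} {s : Finset ↥A}
    (h : H.IsNClique n s) :
    G'.IsNClique n (s.map (Function.Embedding.subtype _)) := by
  constructor
  · rintro x hx y hy hxy
    simp only [Finset.coe_map, Set.mem_image, Finset.mem_coe] at hx hy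
    obtain ⟨x', hx', rfl⟩ := hx
    obtain ⟨y', hy', rfl⟩ := hy
    exact hadj _ _ (h.1 hx' hy' (by rintro rfl; exact hxy rfl))
  · rw [Finset.card_map]; exact h.2

private lemma mem_map_subtype {V : Type} {A : Set V} {s : Finset ↥A} {x : V}
    (hx : x ∈ s.map (Function.Embedding.subtype _)) : x ∈ A := by
  simp only [Finset.mem_map, Function.Embedding.coe_subtype] at hx
  obtain ⟨x', _, rfl⟩ := hx
  exact x'.2

private lemma ramseyProp_step {k l a b : ℕ} (ha : 0 < a) (hb : 0 < b)
    (hA : RamseyProp a k (l + 1)) (hB : RamseyProp b (k + 1) l) :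
    RamseyProp (a + b) (k + 1) (l + 1) := by
  classical
  intro V _ G hcard
  have hV : 0 < Fintype.card V := by omega
  obtain ⟨v⟩ := Fintype.card_pos_iff.mp hV
  set A : Set V := {w | G.Adj v w} with hAdef
  set B : Set V := {w | w ≠ v ∧ ¬ G.Adj v w} with hBdef
  have hcards : a ≤ Fintype.card ↥A ∨ b ≤ Fintype.card ↥B := by
    by_contra hcon
    push_neg at hcon
    have hcover : (Set.univ : Set V) ⊆ A ∪ B ∪ {v} := by
      intro w _
      by_cases h1 : G.Adj v w
      · exact Or.inl (Or.inl h1)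
      · by_cases h2 : w = v
        · exact Or.inr h2
        · exact Or.inl (Or.inr ⟨h2, h1⟩)
    have h3 : (Set.univ : Set V).ncard ≤ A.ncard + B.ncard + 1 := by
      calc (Set.univ : Set V).ncard ≤ (A ∪ B ∪ {v}).ncard :=
            Set.ncard_le_ncard hcover (Set.toFinite _)
        _ ≤ (A ∪ B).ncard + ({v} : Set V).ncard := Set.ncard_union_le _ _
        _ ≤ A.ncard + B.ncard + 1 := by
            have := Set.ncard_union_le A B
            simp [Set.ncard_singleton]; omega
    have hA' : A.ncard = Fintype.card ↥A := by
      rw [← Nat.card_coe_set_eq, Nat.card_eq_fintype_card]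
    have hB' : B.ncard = Fintype.card ↥B := by
      rw [← Nat.card_coe_set_eq, Nat.card_eq_fintype_card]
    rw [Set.ncard_univ, Nat.card_eq_fintype_card, hA', hB'] at h3
    omega
  rcases hcards with hc | hc
  · rcases hA ↥A (G.induce A) hc with ⟨s, hs⟩ | ⟨s, hs⟩
    · refine Or.inl ⟨insert v (s.map (Function.Embedding.subtype _)), ?_⟩
      refine (clique_map_subtype (fun x y h => h) hs).insert ?_
      intro w hw
      exact mem_map_subtype hw
    · refine Or.inr ⟨s.map (Function.Embedding.subtype _), ?_⟩
      refine clique_map_subtype (G' := Gᶜ) (fun x y h => ?_) hs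
      rw [compl_adj] at h ⊢
      exact ⟨Subtype.coe_ne_coe.mpr h.1, fun hh => h.2 hh⟩
  · rcases hB ↥B (G.induce B) hc with ⟨s, hs⟩ | ⟨s, hs⟩
    · exact Or.inl ⟨_, clique_map_subtype (fun x y h => h) hs⟩
    · refine Or.inr ⟨insert v (s.map (Function.Embedding.subtype _)), ?_⟩
      refine (clique_map_subtype (G' := Gᶜ) (fun x y h => ?_) hs).insert ?_
      · rw [compl_adj] at h ⊢
        exact ⟨Subtype.coe_ne_coe.mpr h.1, fun hh => h.2 hh⟩
      · intro w hw
        have hwB : w ∈ B := mem_map_subtype hw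
        rw [compl_adj]
        exact ⟨fun h => hwB.1 h.symm, hwB.2⟩

private lemma ramseyProp_exists (k l : ℕ) : ∃ N, 0 < N ∧ RamseyProp N k l := by
  induction k generalizing l with
  | zero => exact ⟨1, one_pos, fun V _ G _ => Or.inl ⟨∅, isNClique_empty.mpr rfl⟩⟩
  | succ k ihk =>
    induction l with
    | zero => exact ⟨1, one_pos, fun V _ G _ => Or.inr ⟨∅, isNClique_empty.mpr rfl⟩⟩
    | succ l ihl =>
      obtain ⟨a, ha, hA⟩ := ihk (l + 1)
      obtain ⟨b, hb, hB⟩ := ihl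
      exact ⟨a + b, by omega, ramseyProp_step ha hb hA hB⟩

/-- The set of vertices reachable from `u` by walks avoiding `S`. -/
private def Comp {V : Type} (G : SimpleGraph V) (S : Set V) (u : V) : Set V :=
  {w | ∃ p : G.Walk u w, ∀ x ∈ p.support, x ∉ S}

private lemma mem_comp_self {V : Type} {G : SimpleGraph V} {S : Set V} {u : V} (hu : u ∉ S) :
    u ∈ Comp G S u :=
  ⟨Walk.nil, by simpa using hu⟩

private lemma comp_disjoint {V : Type} {G : SimpleGraph V} {S : Set V} {u : V} :
    Disjoint (Comp G S u) S := by
  rw [Set.disjoint_left]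
  rintro w ⟨p, hp⟩ hw
  exact hp w (Walk.end_mem_support p) hw

private lemma comp_append {V : Type} {G : SimpleGraph V} {S : Set V} {u a c : V}
    (ha : a ∈ Comp G S u) (p : G.Walk a c) (hp : ∀ x ∈ p.support, x ∉ S) : c ∈ Comp G S u := by
  obtain ⟨q, hq⟩ := ha
  refine ⟨q.append p, fun x hx => ?_⟩
  rcases (Walk.mem_support_append_iff _ _).mp hx with h | h
  · exact hq x h
  · exact hp x h

private lemma comp_reach {V : Type} {G : SimpleGraph V} {S : Set V} {u : V} :
    ∀ {a c : V} (p : G.Walk a c) (ha : a ∈ Comp G S u) (hc : c ∈ Comp G S u),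
      (∀ x ∈ p.support, x ∉ S) → (G.induce (Comp G S u)).Reachable ⟨a, ha⟩ ⟨c, hc⟩ := by
  intro a c p
  induction p with
  | nil => intro ha hc _; rfl
  | @cons a x c h p ih =>
    intro ha hc hp
    have hx : x ∉ S := hp x (by simp)
    have hxm : x ∈ Comp G S u := comp_append ha (Walk.cons h Walk.nil) (by
      intro y hy
      simp only [Walk.support_cons, Walk.support_nil, List.mem_cons, List.mem_singleton] at hy
      rcases hy with rfl | hy
      · exact fun hs => hp y (by simp) hs
      · simp at hy; subst hy; exact hx)
    have h1 : (G.induce (Comp G S u)).Adj ⟨a, ha⟩ ⟨x, hxm⟩ := h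
    exact h1.reachable.trans (ih hxm hc (fun y hy => hp y (by simp [hy])))

private lemma comp_full_aux {V : Type} {G : SimpleGraph V} {S : Set V} {u : V} :
    ∀ {a s : V} (p : G.Walk a s), a ∈ Comp G S u → s ∈ S →
      (∀ x ∈ p.support, x ∉ S \ {s}) → ∃ c ∈ Comp G S u, G.Adj s c := by
  intro a s p
  induction p with
  | nil =>
    intro ha hs _
    exact absurd hs (Set.disjoint_left.mp comp_disjoint ha)
  | @cons a x c h p ih =>
    intro ha hs hp
    by_cases hxS : x ∈ S
    · have hxs : x = c := by
        by_contra hne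
        exact hp x (by simp) ⟨hxS, hne⟩
      subst hxs
      exact ⟨a, ha, h.symm⟩
    · have hxm : x ∈ Comp G S u := comp_append ha (Walk.cons h Walk.nil) (by
        intro y hy
        simp only [Walk.support_cons, Walk.support_nil, List.mem_cons, List.mem_singleton] at hy
        rcases hy with rfl | hy
        · exact Set.disjoint_left.mp comp_disjoint ha
        · simp at hy; subst hy; exact hxS)
      exact ih hxm hs (fun y hy => hp y (by simp [hy]))

/-- Every vertex of a minimal separator has a neighbor in the avoiding-component of `u`. -/
private lemma comp_full {V : Type} {G : SimpleGraph V} {S : Set V} {u v : V}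
    (hu : u ∉ S) (hsep : Separates G S u v)
    (hmin : ∀ S' ⊂ S, ¬ Separates G S' u v) {s : V} (hs : s ∈ S) :
    ∃ c ∈ Comp G S u, G.Adj s c := by
  classical
  have hss : S \ {s} ⊂ S := Set.sdiff_singleton_ssubset.mpr hs
  have hns := hmin _ hss
  rw [Separates] at hns
  push_neg at hns
  obtain ⟨p, hp⟩ := hns
  have hsupp : s ∈ p.support := by
    obtain ⟨x, hx, hxS⟩ := hsep p
    have := hp x hx
    by_contra hne
    exact this ⟨hxS, by rintro rfl; exact hne hx⟩
  refine comp_full_aux (p.takeUntil s hsupp) (mem_comp_self hu) hs ?_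
  intro y hy
  exact hp y (Walk.support_takeUntil_subset p hsupp hy)

/-- If `G` has clique number `k` and has no `K_{2,q}` induced minor, then every minimal
separator of `G` has size at most `R(k+1, q) - 1`. -/
theorem minimalSeparator_small_of_no_K2q_inducedMinor {V : Type} [Fintype V]
    (q k : ℕ) (hq : 0 < q) (hk : 0 < k) (G : SimpleGraph V) (hω : G.cliqueNum = k)
    (him : ¬ HasInducedMinor G (completeBipartiteGraph (Fin 2) (Fin q))) :
    ∀ S : Set V, IsMinimalSeparator G S → S.ncard ≤ ramseyNumber (k + 1) q - 1 := by
  classical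
  intro S hS
  obtain ⟨u, v, huv, hnadj, huS, hvS, hsep, hmin⟩ := hS
  obtain ⟨hRpos, hR⟩ : 0 < ramseyNumber (k + 1) q ∧ RamseyProp (ramseyNumber (k + 1) q) (k + 1) q :=
    Nat.sInf_mem (ramseyProp_exists (k + 1) q)
  by_contra hcon
  have hSR : ramseyNumber (k + 1) q ≤ Fintype.card ↥S := by
    have hnc : S.ncard = Fintype.card ↥S := by
      rw [← Nat.card_coe_set_eq, Nat.card_eq_fintype_card]
    omega
  rcases hR ↥S (G.induce S) hSR with ⟨s, hs⟩ | ⟨t, ht⟩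
  · -- a clique of size k+1 contradicts cliqueNum = k
    have h1 := clique_map_subtype (fun x y h => h) hs
    have h3 : (s.map (Function.Embedding.subtype _)).card ≤ G.cliqueNum :=
      SimpleGraph.IsClique.card_le_cliqueNum (tc := h1.1)
    rw [h1.2] at h3
    omega
  · -- an independent set of size q in S yields a K_{2,q} induced minor
    set e : Fin q → ↥S := fun j => ↑(t.equivFin.symm (Fin.cast ht.2.symm j)) with he
    have he_mem : ∀ j, e j ∈ t := fun j => (t.equivFin.symm _).2
    have he_inj : Function.Injective e := by
      intro i j hij
      have h5 := t.equivFin.symm.injective (Subtype.ext hij)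
      exact Fin.ext (by simpa using congrArg Fin.val h5)
    have hindep : ∀ i j : Fin q, i ≠ j → (↑(e i) : V) ≠ ↑(e j) ∧ ¬ G.Adj ↑(e i) ↑(e j) := by
      intro i j hij
      have hne : e i ≠ e j := fun h => hij (he_inj h)
      have h4 := ht.1 (Finset.mem_coe.mpr (he_mem i)) (Finset.mem_coe.mpr (he_mem j)) hne
      rw [compl_adj] at h4
      exact ⟨Subtype.coe_ne_coe.mpr h4.1, fun h => h4.2 h⟩
    have hu' : u ∈ Comp G S u := mem_comp_self huS
    have hv' : v ∈ Comp G S v := mem_comp_self hvS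
    have hsep' : Separates G S v u := fun p => by
      obtain ⟨x, hx, hxS⟩ := hsep p.reverse
      exact ⟨x, by simpa using hx, hxS⟩
    have hmin' : ∀ S' ⊂ S, ¬ Separates G S' v u := by
      intro S' hS' hcon'
      refine hmin S' hS' (fun p => ?_)
      obtain ⟨x, hx, hxS⟩ := hcon' p.reverse
      exact ⟨x, by simpa using hx, hxS⟩
    have hdisj : Disjoint (Comp G S u) (Comp G S v) := by
      rw [Set.disjoint_left]
      rintro w ⟨p, hp⟩ ⟨r, hr⟩
      obtain ⟨x, hx, hxS⟩ := hsep (p.append r.reverse)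
      rcases (Walk.mem_support_append_iff _ _).mp hx with h | h
      · exact hp x h hxS
      · rw [Walk.support_reverse] at h
        exact hr x (List.mem_reverse.mp h) hxS
    have hnoedge : ∀ a ∈ Comp G S u, ∀ b ∈ Comp G S v, ¬ G.Adj a b := by
      rintro a ⟨p, hp⟩ b ⟨r, hr⟩ hab
      obtain ⟨x, hx, hxS⟩ := hsep (p.append (Walk.cons hab r.reverse))
      rcases (Walk.mem_support_append_iff _ _).mp hx with h | h
      · exact hp x h hxS
      · rw [Walk.support_cons] at h
        rcases List.mem_cons.mp h with rfl | h
        · exact hp x (p.end_mem_support) hxS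
        · rw [Walk.support_reverse] at h
          exact hr x (List.mem_reverse.mp h) hxS
    have hfu : ∀ s ∈ S, ∃ c ∈ Comp G S u, G.Adj s c :=
      fun s hs => comp_full huS hsep hmin hs
    have hfv : ∀ s ∈ S, ∃ c ∈ Comp G S v, G.Adj s c :=
      fun s hs => comp_full hvS hsep' hmin' hs
    set X : Fin 2 ⊕ Fin q → Set V :=
      Sum.elim (fun i => if i = 0 then Comp G S u else Comp G S v)
        (fun j => {(↑(e j) : V)}) with hX
    have hX0 : X (Sum.inl 0) = Comp G S u := by simp [hX]
    have hX1 : X (Sum.inl 1) = Comp G S v := by simp [hX]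
    have hXr : ∀ j, X (Sum.inr j) = {(↑(e j) : V)} := fun j => by simp [hX]
    have hfin2 : ∀ i : Fin 2, i = 0 ∨ i = 1 := by decide
    refine him ⟨X, ?_, ?_, ?_⟩
    · -- pairwise disjoint bags
      rintro (i | i) (j | j) hne
      · rcases hfin2 i with rfl | rfl <;> rcases hfin2 j with rfl | rfl
        · exact absurd rfl hne
        · rw [hX0, hX1]; exact hdisj
        · rw [hX1, hX0]; exact hdisj.symm
        · exact absurd rfl hne
      · rcases hfin2 i with rfl | rfl
        · rw [hX0, hXr]
          exact Set.disjoint_singleton_right.mpr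
            (fun h => Set.disjoint_left.mp comp_disjoint h (e j).2)
        · rw [hX1, hXr]
          exact Set.disjoint_singleton_right.mpr
            (fun h => Set.disjoint_left.mp comp_disjoint h (e j).2)
      · rcases hfin2 j with rfl | rfl
        · rw [hX0, hXr]
          exact (Set.disjoint_singleton_right.mpr
            (fun h => Set.disjoint_left.mp comp_disjoint h (e i).2)).symm
        · rw [hX1, hXr]
          exact (Set.disjoint_singleton_right.mpr
            (fun h => Set.disjoint_left.mp comp_disjoint h (e i).2)).symm
      · rw [hXr, hXr]
        refine Set.disjoint_singleton.mpr ((hindep i j (fun h => hne (by rw [h]))).1)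
    · -- connected bags
      have hconn : ∀ w, w ∉ S → (G.induce (Comp G S w)).Connected := by
        intro w hw
        refine (connected_iff _).mpr ⟨?_, ⟨⟨w, mem_comp_self hw⟩⟩⟩
        intro x y
        obtain ⟨p, hp⟩ := x.2
        obtain ⟨r, hr⟩ := y.2
        exact (comp_reach p (mem_comp_self hw) x.2 hp).symm.trans
          (comp_reach r (mem_comp_self hw) y.2 hr)
      rintro (i | j)
      · rcases hfin2 i with rfl | rfl
        · rw [hX0]; exact hconn u huS
        · rw [hX1]; exact hconn v hvS
      · rw [hXr]
        refine (connected_iff _).mpr ⟨?_, ⟨⟨↑(e j), rfl⟩⟩⟩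
        intro x y
        have hxy : x = y := Subtype.ext
          ((Set.mem_singleton_iff.mp x.2).trans (Set.mem_singleton_iff.mp y.2).symm)
        rw [hxy]
    · -- adjacency iff
      rintro (i | i) (j | j) hne
      · rcases hfin2 i with rfl | rfl <;> rcases hfin2 j with rfl | rfl
        · exact absurd rfl hne
        · constructor
          · rintro ⟨a, ha, b, hb, hab⟩
            rw [hX0] at ha; rw [hX1] at hb
            exact absurd hab (hnoedge a ha b hb)
          · intro h; simp at h
        · constructor
          · rintro ⟨a, ha, b, hb, hab⟩
            rw [hX1] at ha; rw [hX0] at hb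
            exact absurd hab.symm (hnoedge b hb a ha)
          · intro h; simp at h
        · exact absurd rfl hne
      · refine ⟨fun _ => by simp, fun _ => ?_⟩
        rcases hfin2 i with rfl | rfl
        · obtain ⟨c, hc, hadj⟩ := hfu (↑(e j)) (e j).2
          exact ⟨c, by rw [hX0]; exact hc, ↑(e j), by rw [hXr]; exact Set.mem_singleton _, hadj.symm⟩
        · obtain ⟨c, hc, hadj⟩ := hfv (↑(e j)) (e j).2
          exact ⟨c, by rw [hX1]; exact hc, ↑(e j), by rw [hXr]; exact Set.mem_singleton _, hadj.symm⟩
      · refine ⟨fun _ => by simp, fun _ => ?_⟩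
        rcases hfin2 j with rfl | rfl
        · obtain ⟨c, hc, hadj⟩ := hfu (↑(e i)) (e i).2
          exact ⟨↑(e i), by rw [hXr]; exact Set.mem_singleton _, c, by rw [hX0]; exact hc, hadj⟩
        · obtain ⟨c, hc, hadj⟩ := hfv (↑(e i)) (e i).2
          exact ⟨↑(e i), by rw [hXr]; exact Set.mem_singleton _, c, by rw [hX1]; exact hc, hadj⟩
      · constructor
        · rintro ⟨a, ha, b, hb, hab⟩
          rw [hXr] at ha; rw [hXr] at hb
          rw [Set.mem_singleton_iff] at ha hb
          subst ha; subst hb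
          exact absurd hab (hindep i j (fun h => hne (by rw [h]))).2
        · intro h; simp at h
end

section
/- For each p ≥ 2, if a graph G contains no K_p⁻ (the complete graph on p vertices minus one edge) as an induced minor, then the Hadwiger number of G satisfies η(G) ≤ max{2p − 4, ω(G)}. -/
open SimpleGraph

/-! Write `p = m + 2` and take a `K_q` minor model whose branch sets have minimum total size.
If every branch set is a single vertex, the model is a `q`-clique. Otherwise some branch set `B`
has two vertices `u ≠ w` whose removal keeps it connected (two leaves of a spanning tree). By
minimality, `B \ {c}` is missed by some other branch set `X j` for `c = u, w`; if `m` other branch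
sets touched `B \ {c}`, then `X j`, `B \ {c}` and these `m` sets would form an induced `K_p⁻`
minor. So fewer than `m` branch sets touch `B \ {u}`, and fewer than `m` touch `B \ {w}`. Yet
every other branch set touches one of them, as it touches `B` at a vertex different from `u` or
from `w`; hence `q - 1 ≤ 2 (m - 1)`. -/

namespace SimpleGraph

variable {V ι : Type*} {G : SimpleGraph V}

def Touches (G : SimpleGraph V) (A B : Set V) : Prop :=
  ∃ a ∈ A, ∃ b ∈ B, G.Adj a b

theorem Touches.symm {A B : Set V} (h : G.Touches A B) : G.Touches B A :=
  let ⟨a, ha, b, hb, hab⟩ := h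
  ⟨b, hb, a, ha, hab.symm⟩

def branchGraph (G : SimpleGraph V) (X : ι → Set V) : SimpleGraph ι where
  Adj i j := i ≠ j ∧ G.Touches (X i) (X j)
  symm := ⟨fun _ _ h => ⟨h.1.symm, h.2.symm⟩⟩
  loopless := ⟨fun _ h => h.1 rfl⟩

def IsBranchSets (G : SimpleGraph V) (X : ι → Set V) : Prop :=
  (∀ i j, i ≠ j → Disjoint (X i) (X j)) ∧ ∀ i, (G.induce (X i)).Connected

theorem IsBranchSets.update [DecidableEq ι] {X : ι → Set V} (hX : G.IsBranchSets X) {i : ι}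
    {A : Set V} (hA : A ⊆ X i) (hconn : (G.induce A).Connected) :
    G.IsBranchSets (Function.update X i A) := by
  have hsub : ∀ j, Function.update X i A j ⊆ X j := by
    intro j
    rcases eq_or_ne j i with rfl | hj
    · simpa using hA
    · simp [hj]
  refine ⟨fun j k hjk => (hX.1 j k hjk).mono (hsub j) (hsub k), fun j => ?_⟩
  rcases eq_or_ne j i with rfl | hj
  · rwa [Function.update_self]
  · rw [Function.update_of_ne hj]
    exact hX.2 j

theorem Connected.exists_ne_connected_induce_compl_singleton [Finite V] [Nontrivial V]
    (hG : G.Connected) :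
    ∃ u v, u ≠ v ∧ (G.induce {u}ᶜ).Connected ∧ (G.induce {v}ᶜ).Connected := by
  obtain ⟨T, hTG, hT⟩ := hG.exists_isTree_le
  have := Fintype.ofFinite V
  classical
  obtain ⟨u, v, huv, hu, hv⟩ := hT.exists_ne_and_degree_eq_one
  have hmono {x : V} : T.induce {x}ᶜ ≤ G.induce {x}ᶜ := fun _ _ h => hTG h
  exact ⟨u, v, huv, (hT.connected.induce_compl_singleton_of_degree_eq_one hu).mono hmono,
    (hT.connected.induce_compl_singleton_of_degree_eq_one hv).mono hmono⟩

theorem Connected.induce_diff_singleton {s : Set V} {u : s}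
    (h : ((G.induce s).induce {u}ᶜ).Connected) : (G.induce (s \ {(u : V)})).Connected :=
  h.map ⟨fun x => ⟨x.1.1, x.1.2, fun hx => x.2 (Subtype.ext hx)⟩, id⟩
    fun x => ⟨⟨⟨x.1, x.2.1⟩, fun hx => x.2.2 (congrArg Subtype.val hx)⟩, rfl⟩

theorem exists_ne_connected_induce_diff_singleton [Finite V] {s : Set V}
    (hs : (G.induce s).Connected) (hnt : s.Nontrivial) :
    ∃ u ∈ s, ∃ w ∈ s, u ≠ w ∧ (G.induce (s \ {u})).Connected ∧
      (G.induce (s \ {w})).Connected := by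
  have := hnt.coe_sort
  obtain ⟨u, w, huw, hu, hw⟩ := hs.exists_ne_connected_induce_compl_singleton
  exact ⟨u, u.2, w, w.2, Subtype.coe_ne_coe.2 huw, hu.induce_diff_singleton,
    hw.induce_diff_singleton⟩

def completeGraphMinusEdge (m : ℕ) : SimpleGraph (Fin (m + 2)) :=
  (⊤ : SimpleGraph (Fin (m + 2))).deleteEdges {s(0, 1)}

theorem completeGraphMinusEdge_adj {m : ℕ} {a b : Fin (m + 2)} :
    (completeGraphMinusEdge m).Adj a b ↔ a ≠ b ∧ s(a, b) ≠ s(0, 1) := by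
  simp [completeGraphMinusEdge]

end SimpleGraph

section Minors

variable {V ι : Type*} {G : SimpleGraph V}

theorem isMinorModel_iff {H : SimpleGraph ι} {X : ι → Set V} :
    IsMinorModel H G X ↔ G.IsBranchSets X ∧ H ≤ G.branchGraph X :=
  ⟨fun ⟨hd, hc, ha⟩ => ⟨⟨hd, hc⟩, fun _ _ h => ⟨h.ne, ha h⟩⟩,
    fun ⟨⟨hd, hc⟩, hle⟩ => ⟨hd, hc, fun _ _ h => (hle h).2⟩⟩

theorem SimpleGraph.IsBranchSets.isInducedMinorModel {X : ι → Set V} (hX : G.IsBranchSets X) :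
    IsInducedMinorModel (G.branchGraph X) G X :=
  ⟨hX.1, hX.2, fun _ _ h => ⟨fun ht => ⟨h, ht⟩, And.right⟩⟩

theorem IsInducedMinorModel.comp {α β : Type*} {H : SimpleGraph α} {H' : SimpleGraph β}
    {X : β → Set V} (hX : IsInducedMinorModel H' G X) (f : H ↪g H') :
    IsInducedMinorModel H G (X ∘ f) :=
  ⟨fun _ _ h => hX.1 _ _ (f.injective.ne h), fun _ => hX.2.1 _,
    fun _ _ h => (hX.2.2 _ _ (f.injective.ne h)).trans f.map_adj_iff⟩

theorem HasMinor.exists_isMinorModel_minimal [Fintype ι] {H : SimpleGraph ι}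
    (h : HasMinor G H) :
    ∃ X, IsMinorModel H G X ∧
      ∀ Y : ι → Set V, IsMinorModel H G Y → ∑ i, (X i).ncard ≤ ∑ i, (Y i).ncard := by
  obtain ⟨X, hX, hmin⟩ :=
    (measure fun X : ι → Set V => ∑ i, (X i).ncard).wf.has_min {X | IsMinorModel H G X} h
  exact ⟨X, hX, fun Y hY => not_lt.1 (hmin Y hY)⟩

theorem IsMinorModel.exists_not_touches_of_minimal [Fintype ι] [DecidableEq ι] [Finite V]
    {H : SimpleGraph ι} {X : ι → Set V} (hX : IsMinorModel H G X)
    (hmin : ∀ Y : ι → Set V, IsMinorModel H G Y → ∑ j, (X j).ncard ≤ ∑ j, (Y j).ncard)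
    {i : ι} {c : V} (hc : c ∈ X i) (hconn : (G.induce (X i \ {c})).Connected) :
    ∃ j, H.Adj i j ∧ ¬ G.Touches (X j) (X i \ {c}) := by
  by_contra! hall
  set Y := Function.update X i (X i \ {c})
  have hY : IsMinorModel H G Y := by
    refine isMinorModel_iff.2 ⟨(isMinorModel_iff.1 hX).1.update Set.sdiff_subset hconn,
      fun a b hab => ⟨hab.ne, ?_⟩⟩
    simp only [Y, Function.update_apply]
    split_ifs with ha hb hb
    · exact absurd (ha.trans hb.symm) hab.ne
    · subst ha
      exact (hall b hab).symm
    · subst hb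
      exact hall a hab.symm
    · exact hX.2.2 hab
  have hsmaller : ∑ j, (Y j).ncard < ∑ j, (X j).ncard := by
    refine Finset.sum_lt_sum (fun j _ => Set.ncard_le_ncard ?_) ⟨i, Finset.mem_univ _, ?_⟩
    · rcases eq_or_ne j i with rfl | hj
      · simp [Y]
      · simp [Y, hj]
    · simpa [Y] using Set.ncard_sdiff_singleton_lt_of_mem hc
  exact (hmin Y hY).not_gt hsmaller

theorem IsMinorModel.card_le_cliqueNum [Fintype ι] [Finite V] {X : ι → Set V}
    (hX : IsMinorModel ⊤ G X) (hs : ∀ i, (X i).Subsingleton) :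
    Fintype.card ι ≤ G.cliqueNum := by
  classical
  choose f hf using fun i => Set.nonempty_coe_sort.1 (hX.2.1 i).nonempty
  have hX_eq (i) : X i = {f i} := (hs i).eq_singleton_of_mem (hf i)
  have hinj : f.Injective := fun i j hij => by
    by_contra hne
    exact (hX.1 i j hne).ne_of_mem (hf i) (hf j) hij
  have hclique : G.IsClique (Finset.univ.image f : Set V) := by
    simp only [Finset.coe_image, Finset.coe_univ, Set.image_univ]
    rintro _ ⟨i, rfl⟩ _ ⟨j, rfl⟩ hij
    obtain ⟨a, ha, b, hb, hab⟩ := hX.2.2 ((top_adj _ _).2 (ne_of_apply_ne f hij))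
    rw [hX_eq, Set.mem_singleton_iff] at ha hb
    rwa [← ha, ← hb]
  calc Fintype.card ι = (Finset.univ.image f).card :=
        (Finset.card_image_of_injective _ hinj).symm
    _ ≤ G.cliqueNum := hclique.card_le_cliqueNum

theorem IsInducedMinorModel.hasInducedMinor_completeGraphMinusEdge {m : ℕ}
    {H : SimpleGraph ι} {X : ι → Set V} (hX : IsInducedMinorModel H G X) {x y : ι}
    (hxy : x ≠ y) (e : Fin m ↪ ι) (hnadj : ¬ H.Adj x y) (hx : ∀ k, H.Adj x (e k))
    (hy : ∀ k, H.Adj y (e k)) (he : ∀ k l, k ≠ l → H.Adj (e k) (e l)) :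
    HasInducedMinor G (completeGraphMinusEdge m) := by
  set τ : Fin (m + 2) → ι := Fin.cons x (Fin.cons y e)
  have he' (k l) : H.Adj (e k) (e l) ↔ k ≠ l := ⟨fun h hkl => h.ne (hkl ▸ rfl), he k l⟩
  have hadj (a b) : H.Adj (τ a) (τ b) ↔ (completeGraphMinusEdge m).Adj a b := by
    rw [completeGraphMinusEdge_adj]
    refine Fin.cases ?_ (Fin.cases ?_ fun k => ?_) a <;>
      refine Fin.cases ?_ (Fin.cases ?_ fun l => ?_) b <;>
      simp [τ, hnadj, mt H.adj_symm hnadj, hx, hy, (hx _).symm, (hy _).symm, he', Sym2.eq_swap,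
        Fin.succ_succ_ne_one, (Fin.succ_succ_ne_one _).symm, (Fin.succ_ne_zero _).symm]
  have hτ : τ.Injective := by
    intro a b
    refine Fin.cases ?_ (Fin.cases ?_ fun k => ?_) a <;>
      refine Fin.cases ?_ (Fin.cases ?_ fun l => ?_) b <;>
      simp [τ, hxy, hxy.symm, (hx _).ne, (hy _).ne, ((hx _).ne).symm, ((hy _).ne).symm]
  exact ⟨_, hX.comp ⟨⟨τ, hτ⟩, hadj _ _⟩⟩

theorem IsMinorModel.hasInducedMinor_completeGraphMinusEdge [DecidableEq ι] {m : ℕ}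
    {X : ι → Set V} (hX : IsMinorModel ⊤ G X) {i j₀ : ι} {A : Set V} (hA : A ⊆ X i)
    (hconn : (G.induce A).Connected) (hj₀ : j₀ ≠ i) (hj₀A : ¬ G.Touches (X j₀) A)
    (e : Fin m ↪ ι) (he : ∀ k, e k ≠ i ∧ G.Touches (X (e k)) A) :
    HasInducedMinor G (completeGraphMinusEdge m) := by
  have hY := ((isMinorModel_iff.1 hX).1.update hA hconn).isInducedMinorModel
  have htop {j k : ι} (hjk : j ≠ k) : G.Touches (X j) (X k) := hX.2.2 ((top_adj _ _).2 hjk)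
  refine hY.hasInducedMinor_completeGraphMinusEdge hj₀ e ?_ (fun k => ?_) (fun k => ?_)
    (fun k l hkl => ?_)
  · rintro ⟨-, h⟩
    simp only [Function.update_self, Function.update_of_ne hj₀] at h
    exact hj₀A h
  · have hne : j₀ ≠ e k := fun h => hj₀A (h ▸ (he k).2)
    refine ⟨hne, ?_⟩
    simpa only [Function.update_of_ne hj₀, Function.update_of_ne (he k).1] using htop hne
  · refine ⟨(he k).1.symm, ?_⟩
    simpa only [Function.update_self, Function.update_of_ne (he k).1] using (he k).2.symm
  · refine ⟨e.injective.ne hkl, ?_⟩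
    simpa only [Function.update_of_ne (he _).1] using htop (e.injective.ne hkl)

theorem IsMinorModel.card_le_two_mul_of_minimal [Fintype ι] [DecidableEq ι] [Finite V] {m : ℕ}
    {X : ι → Set V} (hX : IsMinorModel ⊤ G X)
    (hmin : ∀ Y : ι → Set V, IsMinorModel ⊤ G Y → ∑ j, (X j).ncard ≤ ∑ j, (Y j).ncard)
    {i : ι} (hi : (X i).Nontrivial) (h : ¬ HasInducedMinor G (completeGraphMinusEdge m)) :
    Fintype.card ι ≤ 2 * m := by
  classical
  obtain ⟨u, hu, w, hw, huw, hconn_u, hconn_w⟩ :=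
    exists_ne_connected_induce_diff_singleton (hX.2.1 i) hi
  let N (c : V) : Finset ι := Finset.univ.filter fun j => j ≠ i ∧ G.Touches (X j) (X i \ {c})
  have hN {c : V} (hc : c ∈ X i) (hconn : (G.induce (X i \ {c})).Connected) :
      (N c).card < m := by
    obtain ⟨j₀, hij₀, hj₀⟩ := hX.exists_not_touches_of_minimal hmin hc hconn
    by_contra! hm
    obtain ⟨e⟩ := Function.Embedding.nonempty_of_card_le (by simpa using hm :
      Fintype.card (Fin m) ≤ Fintype.card (N c))
    exact h (hX.hasInducedMinor_completeGraphMinusEdge Set.sdiff_subset hconn hij₀.ne' hj₀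
      (e.trans (Function.Embedding.subtype _)) fun k => (Finset.mem_filter.1 (e k).2).2)
  have hcover : Finset.univ.erase i ⊆ N u ∪ N w := by
    intro j hj
    have hji := Finset.ne_of_mem_erase hj
    obtain ⟨a, ha, b, hb, hab⟩ := hX.2.2 ((top_adj j i).2 hji)
    have hmem {c : V} (hbc : b ≠ c) : j ∈ N c :=
      Finset.mem_filter.2 ⟨Finset.mem_univ _, hji, a, ha, b, ⟨hb, hbc⟩, hab⟩
    rcases (ne_or_eq b u).imp_right (fun hbu => hbu ▸ huw) with hbu | hbw
    exacts [Finset.mem_union_left _ (hmem hbu), Finset.mem_union_right _ (hmem hbw)]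
  calc Fintype.card ι = (Finset.univ.erase i).card + 1 :=
        (Finset.card_erase_add_one (Finset.mem_univ i)).symm
    _ ≤ (N u).card + (N w).card + 1 := by
        gcongr
        exact (Finset.card_le_card hcover).trans (Finset.card_union_le _ _)
    _ ≤ 2 * m := by
        have := hN hu hconn_u
        have := hN hw hconn_w
        omega

end Minors

/-- If `G` has no `K_p⁻` (complete graph on `p ≥ 2` vertices minus an edge) induced minor,
then its Hadwiger number is at most `max (2p - 4) ω(G)`. -/
theorem hadwiger_le_of_no_Kp_minus_inducedMinor {V : Type} [Fintype V] (p : ℕ) (hp : 2 ≤ p)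
    (G : SimpleGraph V)
    (h : ¬ HasInducedMinor G
      ((⊤ : SimpleGraph (Fin p)).deleteEdges
        {s((⟨0, by omega⟩ : Fin p), (⟨1, by omega⟩ : Fin p))})) :
    hadwigerNumber G ≤ max (2 * p - 4) G.cliqueNum := by
  obtain ⟨m, rfl⟩ : ∃ m, p = m + 2 := ⟨p - 2, by omega⟩
  refine csSup_le' fun q hq => ?_
  obtain ⟨X, hX, hmin⟩ := HasMinor.exists_isMinorModel_minimal hq
  by_cases hs : ∀ i, (X i).Subsingleton
  · have := hX.card_le_cliqueNum hs
    simp only [Fintype.card_fin] at this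
    omega
  · obtain ⟨i, hi⟩ := not_forall.1 hs
    -- `h` is a hypothesis about `completeGraphMinusEdge m` up to unfolding
    have := hX.card_le_two_mul_of_minimal hmin (Set.not_subsingleton_iff.1 hi) h
    simp only [Fintype.card_fin] at this
    omega
end

section
/- A graph G contains the star K_{1,q} as an induced minor if and only if G has an independent set S of size q such that for some connected component C of G − S, every vertex of S has a neighbor in C. -/
open SimpleGraph

lemma reachable_induce_of_support {V : Type} {G : SimpleGraph V} {A B : Set V} {x y : ↥A}
    (p : (G.induce A).Walk x y) (h : ∀ z ∈ p.support, (z : V) ∈ B) :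
    (G.induce B).Reachable ⟨x, h x p.start_mem_support⟩ ⟨y, h y p.end_mem_support⟩ := by
  induction p with
  | nil => exact Reachable.refl _
  | @cons u v w ha q ih =>
    have h' : ∀ z ∈ q.support, (z : V) ∈ B := fun z hz => h z (by simp [hz])
    have hu : (u : V) ∈ B := h u (by simp)
    have : (G.induce B).Adj ⟨u, hu⟩ ⟨v, h' v q.start_mem_support⟩ := ha
    exact this.reachable.trans (ih h')

/-- `G` contains the star `K_{1,q}` as an induced minor iff `G` has an independent set `S` of
size `q` such that some connected component `C` of `G - S` sees every vertex of `S`. -/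
theorem star_inducedMinor_iff {V : Type} (G : SimpleGraph V) (q : ℕ) :
    HasInducedMinor G (completeBipartiteGraph (Fin 1) (Fin q)) ↔
      ∃ S : Set V, S.Finite ∧ S.ncard = q ∧
        (∀ x ∈ S, ∀ y ∈ S, x ≠ y → ¬ G.Adj x y) ∧
        ∃ C : Set V, IsFullComponent G S C := by
  classical
  constructor
  · rintro ⟨X, hdisj, hconn, hiff⟩
    have hstar : ∀ i : Fin q, ∃ a ∈ X (Sum.inl 0), ∃ c ∈ X (Sum.inr i), G.Adj a c := fun i =>
      (hiff (Sum.inl 0) (Sum.inr i) (by simp)).2 (by simp)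
    choose a ha b hb hab using hstar
    have hbinj : Function.Injective b := by
      intro i j hij
      by_contra hne
      exact (hdisj _ _ (fun h => hne (Sum.inr.inj h))).ne_of_mem (hb i) (hij ▸ hb j) rfl
    set S : Set V := Set.range b with hSdef
    have hXS : ∀ w ∈ X (Sum.inl 0), w ∉ S := by
      rintro w hw ⟨i, rfl⟩
      exact (hdisj (Sum.inl 0) (Sum.inr i) (by simp)).ne_of_mem hw (hb i) rfl
    obtain ⟨⟨a₀, ha₀⟩⟩ := (hconn (Sum.inl 0)).nonempty
    set A : Set V := Sᶜ with hAdef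
    set K := (G.induce A).connectedComponentMk ⟨a₀, hXS a₀ ha₀⟩ with hKdef
    set C : Set V := Subtype.val '' K.supp with hCdef
    have hCA : C ⊆ A := by rintro _ ⟨⟨z, hz⟩, _, rfl⟩; exact hz
    have hXC : X (Sum.inl 0) ⊆ C := by
      intro w hw
      obtain ⟨p⟩ := (hconn (Sum.inl 0)).preconnected ⟨a₀, ha₀⟩ ⟨w, hw⟩
      have hr := reachable_induce_of_support (B := A) p (fun z _ => hXS z z.2)
      exact ⟨⟨w, hXS w hw⟩, by
        rw [ConnectedComponent.mem_supp_iff, hKdef]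
        exact (ConnectedComponent.sound hr).symm, rfl⟩
    refine ⟨S, Set.finite_range b, ?_, ?_, C, ?_, ?_, ?_, ?_⟩
    · rw [← Nat.card_coe_set_eq, Nat.card_range_of_injective hbinj,
        Nat.card_eq_fintype_card, Fintype.card_fin]
    · rintro _ ⟨i, rfl⟩ _ ⟨j, rfl⟩ hne hadj
      have hij : i ≠ j := fun h => hne (by rw [h])
      have := (hiff (Sum.inr i) (Sum.inr j) (fun h => hij (Sum.inr.inj h))).1
        ⟨b i, hb i, b j, hb j, hadj⟩
      simp at this
    · exact Set.disjoint_left.2 fun x hx => hCA hx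
    · haveI : Nonempty ↥C := ⟨⟨a₀, hXC ha₀⟩⟩
      refine Connected.mk fun x y => ?_
      obtain ⟨x, hxC⟩ := x
      obtain ⟨y, hyC⟩ := y
      obtain ⟨⟨x, hxA⟩, hxK, rfl⟩ := hxC
      obtain ⟨⟨y, hyA⟩, hyK, rfl⟩ := hyC
      rw [ConnectedComponent.mem_supp_iff] at hxK hyK
      obtain ⟨p⟩ := ConnectedComponent.exact (hxK.trans hyK.symm)
      have hsup : ∀ z ∈ p.support, (z : V) ∈ C := by
        intro z hz
        refine ⟨z, ?_, rfl⟩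
        rw [ConnectedComponent.mem_supp_iff, ← hxK]
        exact (ConnectedComponent.sound (p.takeUntil z hz).reachable).symm
      exact reachable_induce_of_support p hsup
    · rintro _ ⟨⟨x, hxA⟩, hxK, rfl⟩ y hadj hyS
      refine ⟨⟨y, hyS⟩, ?_, rfl⟩
      rw [ConnectedComponent.mem_supp_iff] at hxK ⊢
      rw [← hxK]
      have hadj' : (G.induce A).Adj ⟨x, hxA⟩ ⟨y, hyS⟩ := hadj
      exact ConnectedComponent.sound hadj'.symm.reachable
    · rintro _ ⟨i, rfl⟩
      exact ⟨a i, hXC (ha i), (hab i).symm⟩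
  · rintro ⟨S, hSfin, hScard, hSind, C, hCS, hCconn, hCcl, hCfull⟩
    haveI := hSfin.fintype
    have hcard : Fintype.card S = q := by
      rw [← Nat.card_eq_fintype_card, Nat.card_coe_set_eq, hScard]
    let e : ↥S ≃ Fin q := Fintype.equivFinOfCardEq hcard
    have hsing : ∀ x : V, (G.induce {x}).Connected := by
      intro x
      haveI : Nonempty ↥({x} : Set V) := ⟨⟨x, rfl⟩⟩
      refine Connected.mk fun u v => ?_
      rw [Subtype.ext (u.2.trans v.2.symm : (u : V) = v)]
    refine ⟨Sum.elim (fun _ : Fin 1 => C) (fun i => {(e.symm i : V)}), ?_, ?_, ?_⟩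
    · rintro (a | i) (b | j) huv
      · exact absurd (congrArg Sum.inl (Subsingleton.elim a b)) huv
      · exact Set.disjoint_singleton_right.2 (Set.disjoint_right.1 hCS (e.symm j).2)
      · exact (Set.disjoint_singleton_right.2 (Set.disjoint_right.1 hCS (e.symm i).2)).symm
      · have hij : i ≠ j := fun h => huv (by rw [h])
        exact Set.disjoint_singleton.2
          (fun h => hij (e.symm.injective (Subtype.ext h)))
    · rintro (a | i)
      · exact hCconn
      · exact hsing _
    · rintro (a | i) (b | j) huv
      · exact absurd (congrArg Sum.inl (Subsingleton.elim a b)) huv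
      · refine iff_of_true ?_ (by simp)
        obtain ⟨c, hc, hadj⟩ := hCfull (e.symm j) (e.symm j).2
        exact ⟨c, hc, e.symm j, rfl, hadj.symm⟩
      · refine iff_of_true ?_ (by simp)
        obtain ⟨c, hc, hadj⟩ := hCfull (e.symm i) (e.symm i).2
        exact ⟨e.symm i, rfl, c, hc, hadj⟩
      · have hij : i ≠ j := fun h => huv (by rw [h])
        refine iff_of_false ?_ (by simp)
        rintro ⟨x, hx, y, hy, hadj⟩
        simp only [Sum.elim_inr, Set.mem_singleton_iff] at hx hy
        subst hx; subst hy
        exact hSind _ (e.symm i).2 _ (e.symm j).2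
          (fun h => hij (e.symm.injective (Subtype.ext h))) hadj
end

section
/- If S is a minimal u,v-separator in a graph G and I ⊆ S is an independent set of size q, then G contains K_{2,q} as an induced minor, with bags given by the components of G − S containing u and v respectively, and the singletons {x} for x ∈ I. -/
open SimpleGraph

section MyAux
variable {V : Type} {G : SimpleGraph V}

private lemma my_reach_induce (T : Set V) : ∀ {a b : V} (p : G.Walk a b)
    (_ : ∀ y ∈ p.support, y ∈ T) (ha : a ∈ T) (hb : b ∈ T),
    (G.induce T).Reachable ⟨a, ha⟩ ⟨b, hb⟩ := by
  intro a b p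
  induction p with
  | nil => intro _ _ _; exact Reachable.refl _
  | @cons a w b h p ih =>
    intro hp ha hb
    have hw : w ∈ T := hp w (by simp)
    exact Reachable.trans (Adj.reachable (by exact h : (G.induce T).Adj ⟨a, ha⟩ ⟨w, hw⟩))
      (ih (fun y hy => hp y (by simp [hy])) hw hb)

private lemma my_conn_comp (G : SimpleGraph V) (S : Set V) (u : V) (hu : u ∉ S) :
    (G.induce {x | ∃ p : G.Walk u x, ∀ y ∈ p.support, y ∉ S}).Connected := by
  classical
  set C : Set V := {x | ∃ p : G.Walk u x, ∀ y ∈ p.support, y ∉ S} with hC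
  have huC : u ∈ C := ⟨Walk.nil, by simp [hu]⟩
  rw [connected_iff]
  refine ⟨?_, ⟨⟨u, huC⟩⟩⟩
  have hrc : ∀ (c : V) (hc : c ∈ C), (G.induce C).Reachable ⟨u, huC⟩ ⟨c, hc⟩ := by
    rintro c ⟨p, hp⟩
    have hsub : ∀ y ∈ p.support, y ∈ C := fun y hy =>
      ⟨p.takeUntil y hy, fun z hz => hp z (p.support_takeUntil_subset hy hz)⟩
    exact my_reach_induce C p hsub huC ⟨p, hp⟩
  rintro ⟨a, ha⟩ ⟨b, hb⟩
  exact (hrc a ha).symm.trans (hrc b hb)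

private lemma my_exists_head {a b : V} (r : G.Walk a b) (hab : a ≠ b) :
    ∃ w, G.Adj a w ∧ ∃ r' : G.Walk w b, r'.support = r.support.tail := by
  cases r with
  | nil => exact absurd rfl hab
  | cons h r' => exact ⟨_, h, r', by simp⟩

private lemma my_full_aux (G : SimpleGraph V) (S : Set V) {u v s : V} (hu : u ∉ S) (hs : s ∈ S)
    (p : G.Walk u v) (hp : ∀ x ∈ p.support, x ∉ S \ {s}) (hsp : s ∈ p.support) :
    ∃ w, G.Adj s w ∧ w ∈ {x | ∃ q : G.Walk u x, ∀ y ∈ q.support, y ∉ S} := by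
  classical
  set q := p.takeUntil s hsp with hq
  have hcount : q.support.count s = 1 := p.count_support_takeUntil_eq_one hsp
  obtain ⟨w, hw, r', hr'⟩ := my_exists_head q.reverse (fun h => hu (h ▸ hs))
  have hsnot : s ∉ q.reverse.support.tail := by
    have h1 : q.reverse.support = s :: q.reverse.support.tail := q.reverse.support_eq_cons
    have h2 : q.reverse.support.count s = 1 := by
      rw [Walk.support_reverse, List.count_reverse]; exact hcount
    rw [h1, List.count_cons_self] at h2
    have h3 : q.reverse.support.tail.count s = 0 := by omega
    exact List.count_eq_zero.mp h3
  have havoid : ∀ y ∈ r'.support, y ∉ S := by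
    intro y hy
    rw [hr'] at hy
    have hyq : y ∈ q.support := by
      have := List.mem_of_mem_tail hy
      rw [Walk.support_reverse] at this
      exact List.mem_reverse.mp this
    have hyp : y ∈ p.support := p.support_takeUntil_subset hsp hyq
    intro hyS
    exact hp y hyp ⟨hyS, fun hys => hsnot (by simpa [Set.mem_singleton_iff.mp hys] using hy)⟩
  refine ⟨w, hw, r'.reverse, ?_⟩
  intro y hy
  rw [Walk.support_reverse] at hy
  exact havoid y (List.mem_reverse.mp hy)

end MyAux

/-- If `S` is a minimal `u,v`-separator of `G` and `I ⊆ S` is an independent set of size `q`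
(enumerated by `e`), then the components of `G - S` containing `u` and `v` together with the
singletons `{e i}` form an induced minor model of `K_{2,q}` in `G`. -/
theorem inducedMinorModel_K2q_of_minimalSeparator {V : Type} (G : SimpleGraph V)
    (S : Set V) (u v : V) (hne : u ≠ v) (huv : ¬ G.Adj u v) (hu : u ∉ S) (hv : v ∉ S)
    (hsep : Separates G S u v) (hmin : ∀ S' ⊂ S, ¬ Separates G S' u v)
    (q : ℕ) (e : Fin q → V) (he : Function.Injective e) (heS : ∀ i, e i ∈ S)
    (hind : ∀ i j : Fin q, i ≠ j → ¬ G.Adj (e i) (e j)) :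
    IsInducedMinorModel (completeBipartiteGraph (Fin 2) (Fin q)) G
      (Sum.elim
        (fun j : Fin 2 =>
          if j = 0 then {x | ∃ p : G.Walk u x, ∀ y ∈ p.support, y ∉ S}
          else {x | ∃ p : G.Walk v x, ∀ y ∈ p.support, y ∉ S})
        (fun i : Fin q => {e i})) := by
  classical
  set Cu : Set V := {x | ∃ p : G.Walk u x, ∀ y ∈ p.support, y ∉ S} with hCudef
  set Cv : Set V := {x | ∃ p : G.Walk v x, ∀ y ∈ p.support, y ∉ S} with hCvdef
  have hCuS : ∀ x ∈ Cu, x ∉ S := by rintro x ⟨p, hp⟩; exact hp x p.end_mem_support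
  have hCvS : ∀ x ∈ Cv, x ∉ S := by rintro x ⟨p, hp⟩; exact hp x p.end_mem_support
  have hdisjUV : ∀ x, x ∈ Cu → x ∈ Cv → False := by
    rintro x ⟨p, hp⟩ ⟨r, hr⟩
    obtain ⟨y, hy, hyS⟩ := hsep (p.append r.reverse)
    rw [Walk.mem_support_append_iff] at hy
    rcases hy with hy | hy
    · exact hp y hy hyS
    · rw [Walk.support_reverse] at hy
      exact hr y (List.mem_reverse.mp hy) hyS
  have hnoedgeUV : ∀ a ∈ Cu, ∀ b ∈ Cv, ¬ G.Adj a b := by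
    rintro a ⟨p, hp⟩ b ⟨r, hr⟩ hab
    obtain ⟨y, hy, hyS⟩ := hsep (p.append (Walk.cons hab r.reverse))
    rw [Walk.mem_support_append_iff] at hy
    rcases hy with hy | hy
    · exact hp y hy hyS
    · rw [Walk.support_cons] at hy
      rcases List.mem_cons.mp hy with rfl | hy
      · exact hp y p.end_mem_support hyS
      · rw [Walk.support_reverse] at hy
        exact hr y (List.mem_reverse.mp hy) hyS
  have hfull : ∀ s ∈ S, (∃ c ∈ Cu, G.Adj s c) ∧ (∃ c ∈ Cv, G.Adj s c) := by
    intro s hs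
    have hns := hmin (S \ {s}) (Set.sdiff_singleton_ssubset.mpr hs)
    rw [Separates] at hns; push_neg at hns
    obtain ⟨p, hp⟩ := hns
    obtain ⟨x, hxp, hxS⟩ := hsep p
    have hxs : x = s := by
      by_contra h; exact hp x hxp ⟨hxS, h⟩
    subst hxs
    constructor
    · obtain ⟨w, hw, hwC⟩ := my_full_aux G S hu hs p hp hxp
      exact ⟨w, hwC, hw⟩
    · have hp' : ∀ y ∈ p.reverse.support, y ∉ S \ {x} := by
        intro y hy; rw [Walk.support_reverse] at hy; exact hp y (List.mem_reverse.mp hy)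
      obtain ⟨w, hw, hwC⟩ := my_full_aux G S hv hs p.reverse hp'
        (by rw [Walk.support_reverse]; exact List.mem_reverse.mpr hxp)
      exact ⟨w, hwC, hw⟩
  refine ⟨?_, ?_, ?_⟩
  · rintro (j | i) (k | l) hne'
    · have hjk : j ≠ k := fun h => hne' (by rw [h])
      simp only [Sum.elim_inl]
      have key : Disjoint Cu Cv := Set.disjoint_left.mpr (fun x hx hx' => hdisjUV x hx hx')
      fin_cases j <;> fin_cases k <;>
        first
          | exact absurd rfl hjk
          | simpa using key
          | simpa using key.symm
    · simp only [Sum.elim_inl, Sum.elim_inr]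
      refine Set.disjoint_right.mpr ?_
      rintro x rfl
      by_cases hj : j = 0
      · rw [if_pos hj]; intro hx; exact hCuS _ hx (heS l)
      · rw [if_neg hj]; intro hx; exact hCvS _ hx (heS l)
    · simp only [Sum.elim_inl, Sum.elim_inr]
      refine Set.disjoint_left.mpr ?_
      rintro x rfl
      by_cases hk : k = 0
      · rw [if_pos hk]; intro hx; exact hCuS _ hx (heS i)
      · rw [if_neg hk]; intro hx; exact hCvS _ hx (heS i)
    · have hil : i ≠ l := fun h => hne' (by rw [h])
      simp only [Sum.elim_inr]
      exact Set.disjoint_singleton.mpr (fun h => hil (he h))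
  · rintro (j | i)
    · simp only [Sum.elim_inl]
      by_cases hj : j = 0
      · rw [if_pos hj]; exact my_conn_comp G S u hu
      · rw [if_neg hj]; exact my_conn_comp G S v hv
    · simp only [Sum.elim_inr]
      rw [connected_iff]
      refine ⟨?_, ⟨⟨e i, rfl⟩⟩⟩
      rintro ⟨a, ha⟩ ⟨b, hb⟩
      have : a = b := by
        simp only [Set.mem_singleton_iff] at ha hb; rw [ha, hb]
      subst this
      exact Reachable.refl _
  · rintro (j | i) (k | l) hne'
    · have hjk : j ≠ k := fun h => hne' (by rw [h])
      constructor
      · rintro ⟨a, ha, b, hb, hab⟩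
        exfalso
        simp only [Sum.elim_inl] at ha hb
        by_cases hj : j = 0
        · have hk : ¬ k = 0 := fun h => hjk (by rw [hj, h])
          rw [if_pos hj] at ha; rw [if_neg hk] at hb
          exact hnoedgeUV a ha b hb hab
        · have hk : k = 0 := by
            have h1 : j.val ≠ 0 := fun h => hj (Fin.ext h)
            have h2 : j.val ≠ k.val := fun h => hjk (Fin.ext h)
            have h3 := j.isLt; have h4 := k.isLt
            exact Fin.ext (by omega)
          rw [if_neg hj] at ha; rw [if_pos hk] at hb
          exact hnoedgeUV b hb a ha hab.symm
      · intro h; simp at h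
    · simp only [Sum.elim_inl, Sum.elim_inr]
      constructor
      · intro _; simp [completeBipartiteGraph]
      · intro _
        obtain ⟨hcu, hcv⟩ := hfull (e l) (heS l)
        by_cases hj : j = 0
        · rw [if_pos hj]
          obtain ⟨c, hc, hadj⟩ := hcu
          exact ⟨c, hc, e l, rfl, hadj.symm⟩
        · rw [if_neg hj]
          obtain ⟨c, hc, hadj⟩ := hcv
          exact ⟨c, hc, e l, rfl, hadj.symm⟩
    · simp only [Sum.elim_inl, Sum.elim_inr]
      constructor
      · intro _; simp [completeBipartiteGraph]
      · intro _
        obtain ⟨hcu, hcv⟩ := hfull (e i) (heS i)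
        by_cases hk : k = 0
        · rw [if_pos hk]
          obtain ⟨c, hc, hadj⟩ := hcu
          exact ⟨e i, rfl, c, hc, hadj⟩
        · rw [if_neg hk]
          obtain ⟨c, hc, hadj⟩ := hcv
          exact ⟨e i, rfl, c, hc, hadj⟩
    · have hil : i ≠ l := fun h => hne' (by rw [h])
      constructor
      · rintro ⟨a, rfl, b, rfl, hab⟩
        exact absurd hab (hind i l hil)
      · intro h; simp at h
end
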